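/- Restrictions do not matter for an interior optimal offer: let μ be a Borel probability measure on ℝ, and let s, b, b̄, s̄ ∈ ℝ with b̄ ≤ s, s ≤ s̄, b̄ ≤ b, and b ≤ s̄. Suppose p ∈ ℝ maximizes q ↦ (q − s)·μ([q, ∞)) over all q ∈ ℝ, and s ≤ p ≤ b. Then p also maximizes q ↦ (q − s)·μ([max(q, b̄), ∞)) over q ∈ (−∞, s̄]. -/
import Mathlib


open MeasureTheory

/-- **Restrictions do not matter for an interior optimal offer.** Let `μ` be a Borel
probability measure on `ℝ` and `s, b, bbar, sbar ∈ ℝ` with `bbar ≤ s ≤ sbar` and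
`bbar ≤ b ≤ sbar`. If `p` maximizes `q ↦ (q - s) · μ([q, ∞))` over all of `ℝ` and
`s ≤ p ≤ b`, then `p` also maximizes `q ↦ (q - s) · μ([max q bbar, ∞))` over `q ≤ sbar`. -/
theorem interior_optimal_offer_unaffected_by_restrictions
    (μ : Measure ℝ) [IsProbabilityMeasure μ]
    (s b bbar sbar p : ℝ)
    (h1 : bbar ≤ s) (h2 : s ≤ sbar) (h3 : bbar ≤ b) (h4 : b ≤ sbar)
    (hmax : ∀ q : ℝ, (q - s) * (μ (Set.Ici q)).toReal ≤ (p - s) * (μ (Set.Ici p)).toReal)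
    (hsp : s ≤ p) (hpb : p ≤ b) :
    ∀ q ∈ Set.Iic sbar,
      (q - s) * (μ (Set.Ici (max q bbar))).toReal ≤
        (p - s) * (μ (Set.Ici (max p bbar))).toReal := by
  intro q hq
  have hpm : max p bbar = p := max_eq_left (h1.trans hsp)
  rw [hpm]
  rcases le_or_gt bbar q with h | h
  · rw [max_eq_left h]; exact hmax q
  · rw [max_eq_right h.le]
    have hL : (q - s) * (μ (Set.Ici bbar)).toReal ≤ 0 :=
      mul_nonpos_of_nonpos_of_nonneg (by linarith) ENNReal.toReal_nonneg
    have hR : 0 ≤ (p - s) * (μ (Set.Ici p)).toReal :=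
      mul_nonneg (by linarith) ENNReal.toReal_nonneg
    linarith
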